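/- Let a, b ∈ ℚ, r ∈ ℚ, and s ∈ ℂ with Re(s) > 2. Define E₁⁺(a,b)(τ) = −2πi·Σ_{x ∈ (a+ℤ), x>0} x·Σ_{m=1}^∞ e^{2πim(xτ+b)} for τ in the upper half-plane. Then the function t ↦ E₁⁺(a,b)(r+it)·t^{s−1} is absolutely integrable on (0,∞), the double series below converges absolutely, and i·∫_0^∞ E₁⁺(a,b)(r + it)·t^{s−1} dt = (2π)^{1−s}·Γ(s)·Σ_{x ∈ (a+ℤ), x>0} x^{1−s}·Σ_{m=1}^∞ m^{−s}·e^{2πim(b + xr)}, where x^{1−s} = exp((1−s)·log x) and m^{−s} = exp(−s·log m) with the real logarithm, and Γ is the complex Gamma function. -/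

import Mathlib

open MeasureTheory

/-- `E₁⁺(a,b)(τ) = −2πi·Σ_{x ∈ a+ℤ, x>0} x·Σ_{m=1}^∞ e^{2πim(xτ+b)}`. -/
noncomputable def EisPlus (a b : ℚ) (τ : ℂ) : ℂ :=
  (-2 * (Real.pi : ℂ) * Complex.I) *
    ∑' y : {x : ℚ // (x - a).den = 1 ∧ 0 < x}, (y.1 : ℂ) *
      ∑' m : ℕ, Complex.exp (2 * (Real.pi : ℂ) * Complex.I * ((m : ℂ) + 1) *
        ((y.1 : ℂ) * τ + (b : ℂ)))


open MeasureTheory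

namespace Stmt13Aux

variable {a : ℚ}

/-- Every element of the index set is `a` plus an integer. -/
lemma exists_int (y : {x : ℚ // (x - a).den = 1 ∧ 0 < x}) :
    ∃ n : ℤ, (y.1 : ℚ) = a + n := by
  refine ⟨(y.1 - a).num, ?_⟩
  have h := y.2.1
  have : ((y.1 - a).num : ℚ) = y.1 - a := Rat.den_eq_one_iff _ |>.mp h
  linarith [this]

/-- the smallest possible element -/
noncomputable def x₀ (a : ℚ) : ℚ := a + 1 - ⌈a⌉

lemma x₀_pos : 0 < x₀ a := by
  have := Int.ceil_lt_add_one a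
  unfold x₀; linarith

lemma x₀_le_one : x₀ a ≤ 1 := by
  have := Int.le_ceil a
  unfold x₀; linarith

lemma x₀_le (y : {x : ℚ // (x - a).den = 1 ∧ 0 < x}) : x₀ a ≤ y.1 := by
  obtain ⟨n, hn⟩ := exists_int y
  have hpos : 0 < a + (n : ℚ) := hn ▸ y.2.2
  have h1 : 0 < ⌈a + (n : ℚ)⌉ := Int.ceil_pos.mpr hpos
  rw [Int.ceil_add_intCast] at h1
  have : (1 : ℤ) - ⌈a⌉ ≤ n := by omega
  have : ((1 : ℤ) - ⌈a⌉ : ℚ) ≤ (n : ℚ) := by exact_mod_cast this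
  unfold x₀
  push_cast at this ⊢
  linarith [hn]

/-- injection into ℕ -/
noncomputable def jj (y : {x : ℚ // (x - a).den = 1 ∧ 0 < x}) : ℕ := (⌈(y.1 : ℚ)⌉).toNat

lemma jj_pos (y : {x : ℚ // (x - a).den = 1 ∧ 0 < x}) : 1 ≤ jj y := by
  have : 0 < ⌈(y.1 : ℚ)⌉ := Int.ceil_pos.mpr y.2.2
  unfold jj; omega

lemma le_jj (y : {x : ℚ // (x - a).den = 1 ∧ 0 < x}) : (y.1 : ℚ) ≤ (jj y : ℚ) := by
  have h : 0 < ⌈(y.1 : ℚ)⌉ := Int.ceil_pos.mpr y.2.2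
  have := Int.le_ceil (y.1 : ℚ)
  have h2 : ((⌈(y.1 : ℚ)⌉).toNat : ℤ) = ⌈(y.1 : ℚ)⌉ := Int.toNat_of_nonneg h.le
  unfold jj
  calc (y.1 : ℚ) ≤ (⌈(y.1 : ℚ)⌉ : ℚ) := this
    _ = _ := by exact_mod_cast congrArg (fun z : ℤ => (z : ℚ)) h2.symm

lemma jj_le (y : {x : ℚ // (x - a).den = 1 ∧ 0 < x}) : (jj y : ℚ) ≤ (y.1 : ℚ) + 1 := by
  have h : 0 < ⌈(y.1 : ℚ)⌉ := Int.ceil_pos.mpr y.2.2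
  have := (Int.ceil_lt_add_one (y.1 : ℚ)).le
  have h2 : ((⌈(y.1 : ℚ)⌉).toNat : ℤ) = ⌈(y.1 : ℚ)⌉ := Int.toNat_of_nonneg h.le
  unfold jj
  calc ((⌈(y.1 : ℚ)⌉).toNat : ℚ) = (⌈(y.1 : ℚ)⌉ : ℚ) := by exact_mod_cast congrArg (fun z : ℤ => (z : ℚ)) h2
    _ ≤ (y.1 : ℚ) + 1 := this

lemma jj_inj : Function.Injective (jj (a := a)) := by
  intro y y' h
  obtain ⟨n, hn⟩ := exists_int y
  obtain ⟨n', hn'⟩ := exists_int y'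
  have h1 : 0 < ⌈(y.1 : ℚ)⌉ := Int.ceil_pos.mpr y.2.2
  have h2 : 0 < ⌈(y'.1 : ℚ)⌉ := Int.ceil_pos.mpr y'.2.2
  have hc : ⌈(y.1 : ℚ)⌉ = ⌈(y'.1 : ℚ)⌉ := by
    unfold jj at h; omega
  rw [hn, hn', Int.ceil_add_intCast, Int.ceil_add_intCast] at hc
  have : n = n' := by omega
  apply Subtype.ext
  rw [hn, hn', this]


/-- Summability of `x ^ c` over the index set, for `c < -1`. -/
lemma summable_rpow {c : ℝ} (hc : c < -1) :
    Summable (fun y : {x : ℚ // (x - a).den = 1 ∧ 0 < x} => ((y.1 : ℝ)) ^ c) := by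
  set q : ℝ := (x₀ a : ℝ) / 2 with hq
  have hq0 : 0 < q := by
    have := x₀_pos (a := a); positivity
  have hb : Summable (fun n : ℕ => q ^ c * (n : ℝ) ^ c) :=
    (Real.summable_nat_rpow.mpr hc).mul_left _
  have hS : Summable ((fun n : ℕ => q ^ c * (n : ℝ) ^ c) ∘ jj (a := a)) :=
    hb.comp_injective jj_inj
  refine Summable.of_nonneg_of_le (fun y => ?_) (fun y => ?_) hS
  · have : (0:ℝ) < (y.1 : ℝ) := by exact_mod_cast y.2.2
    positivity
  · have hy0 : (0:ℝ) < (y.1 : ℝ) := by exact_mod_cast y.2.2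
    have hx0 : (0:ℝ) < (x₀ a : ℝ) := by exact_mod_cast x₀_pos (a := a)
    have hx1 : ((x₀ a : ℚ) : ℝ) ≤ 1 := by exact_mod_cast x₀_le_one (a := a)
    have hx0y : ((x₀ a : ℚ) : ℝ) ≤ (y.1 : ℝ) := by exact_mod_cast x₀_le y
    have hjle : ((jj y : ℕ) : ℝ) ≤ (y.1 : ℝ) + 1 := by exact_mod_cast jj_le y
    have key : q * (jj y : ℝ) ≤ (y.1 : ℝ) := by
      rw [hq]; nlinarith
    have hjpos : (0:ℝ) < ((jj y : ℕ) : ℝ) := by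
      have := jj_pos y; positivity
    have h1 : ((y.1 : ℝ)) ^ c ≤ (q * (jj y : ℝ)) ^ c :=
      Real.rpow_le_rpow_of_nonpos (mul_pos hq0 hjpos) key (by linarith)
    calc ((y.1 : ℝ)) ^ c ≤ (q * (jj y : ℝ)) ^ c := h1
      _ = q ^ c * ((jj y : ℕ) : ℝ) ^ c := Real.mul_rpow hq0.le (by positivity)

/-- Summability of `x * exp (-ε x)` over the index set, for `ε > 0`. -/
lemma summable_mul_exp {ε : ℝ} (hε : 0 < ε) :
    Summable (fun y : {x : ℚ // (x - a).den = 1 ∧ 0 < x} =>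
      (y.1 : ℝ) * Real.exp (-(ε * (y.1 : ℝ)))) := by
  have hr : ‖Real.exp (-ε)‖ < 1 := by
    rw [Real.norm_eq_abs, abs_of_pos (Real.exp_pos _)]
    exact Real.exp_lt_one_iff.mpr (by linarith)
  have hb : Summable (fun n : ℕ => Real.exp ε * ((n : ℝ) ^ 1 * Real.exp (-ε) ^ n)) :=
    (summable_pow_mul_geometric_of_norm_lt_one 1 hr).mul_left _
  have hS := hb.comp_injective (jj_inj (a := a))
  refine Summable.of_nonneg_of_le (fun y => ?_) (fun y => ?_) hS
  · have : (0:ℝ) < (y.1 : ℝ) := by exact_mod_cast y.2.2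
    positivity
  · have hy0 : (0:ℝ) < (y.1 : ℝ) := by exact_mod_cast y.2.2
    have hjy : (y.1 : ℝ) ≤ ((jj y : ℕ) : ℝ) := by exact_mod_cast le_jj y
    have hjle : ((jj y : ℕ) : ℝ) ≤ (y.1 : ℝ) + 1 := by exact_mod_cast jj_le y
    have h2 : Real.exp (-(ε * (y.1 : ℝ))) ≤ Real.exp ε * Real.exp (-ε) ^ (jj y) := by
      rw [← Real.exp_nat_mul, ← Real.exp_add]
      apply Real.exp_le_exp.mpr
      nlinarith
    calc (y.1 : ℝ) * Real.exp (-(ε * (y.1 : ℝ)))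
        ≤ ((jj y : ℕ) : ℝ) * (Real.exp ε * Real.exp (-ε) ^ (jj y)) := by
          apply mul_le_mul hjy h2 (Real.exp_pos _).le (by positivity)
      _ = Real.exp ε * (((jj y : ℕ) : ℝ) ^ 1 * Real.exp (-ε) ^ (jj y)) := by ring

/-- Summability of `(m+1)^(-σ)` for `σ > 1`. -/
lemma summable_nat_shift {c : ℝ} (hc : c < -1) :
    Summable (fun m : ℕ => ((m : ℝ) + 1) ^ c) := by
  have := (Real.summable_nat_rpow.mpr hc).comp_injective Nat.succ_injective
  refine this.congr fun m => ?_
  simp only [Function.comp_apply]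
  norm_num

end Stmt13Aux

namespace Stmt13Aux

open Complex Set MeasureTheory

lemma exp_split (m : ℕ) (x b r : ℚ) (t : ℝ) :
    Complex.exp (2*(Real.pi:ℂ)*Complex.I*((m:ℂ)+1)*((x:ℂ)*((r:ℂ)+(t:ℂ)*Complex.I)+(b:ℂ)))
      = Complex.exp (2*(Real.pi:ℂ)*Complex.I*((m:ℂ)+1)*((b:ℂ)+(x:ℂ)*(r:ℂ))) *
        Complex.exp (((-(2*Real.pi*((m:ℝ)+1)*((x:ℚ):ℝ)*t)) : ℝ) : ℂ) := by
  rw [← Complex.exp_add]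
  congr 1
  push_cast
  linear_combination (2*(Real.pi:ℂ)*((m:ℂ)+1)*(x:ℂ)*(t:ℂ)) * Complex.I_mul_I

lemma norm_c (m : ℕ) (x b r : ℚ) :
    ‖Complex.exp (2*(Real.pi:ℂ)*Complex.I*((m:ℂ)+1)*((b:ℂ)+(x:ℂ)*(r:ℂ)))‖ = 1 := by
  have h : 2*(Real.pi:ℂ)*Complex.I*((m:ℂ)+1)*((b:ℂ)+(x:ℂ)*(r:ℂ))
      = ((2*Real.pi*((m:ℝ)+1)*(((b:ℚ):ℝ) + ((x:ℚ):ℝ)*((r:ℚ):ℝ)) : ℝ) : ℂ) * Complex.I := by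
    push_cast; ring
  rw [h, Complex.norm_exp_ofReal_mul_I]

lemma norm_texp {t : ℝ} (ht : 0 < t) (s : ℂ) :
    ‖Complex.exp ((s-1) * ((Real.log t : ℝ) : ℂ))‖ = t ^ (s.re - 1) := by
  rw [Complex.norm_exp, Real.rpow_def_of_pos ht]
  congr 1
  simp [Complex.mul_re]
  ring

lemma texp_eq {t : ℝ} (ht : 0 < t) (s : ℂ) :
    Complex.exp ((s-1) * ((Real.log t : ℝ) : ℂ)) = (t:ℂ) ^ (s - 1) := by
  rw [Complex.cpow_def_of_ne_zero (Complex.ofReal_ne_zero.mpr ht.ne'),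
    ← Complex.ofReal_log ht.le, mul_comm]

lemma integrableOn_base {s : ℂ} (hs : 0 < s.re) {L : ℝ} (hL : 0 < L) :
    IntegrableOn (fun t : ℝ => Complex.exp (((-(L*t)) : ℝ) : ℂ) *
      Complex.exp ((s-1) * ((Real.log t : ℝ) : ℂ))) (Ioi 0) := by
  have h0 : IntegrableOn (fun x : ℝ => (Real.exp (-x) : ℂ) * (x:ℂ) ^ (s-1)) (Ioi 0) :=
    Complex.GammaIntegral_convergent hs
  have h1 : IntegrableOn (fun x : ℝ => (Real.exp (-(L*x)) : ℂ) * ((L*x : ℝ):ℂ) ^ (s-1))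
      (Ioi 0) := by
    have h3 := (integrableOn_Ioi_comp_mul_left_iff
      (fun x : ℝ => (Real.exp (-x) : ℂ) * (x:ℂ) ^ (s-1)) 0 hL).mpr
    rw [mul_zero] at h3
    exact h3 h0
  have h2 : IntegrableOn (fun x : ℝ => ((L:ℂ) ^ (s-1))⁻¹ *
      ((Real.exp (-(L*x)) : ℂ) * ((L*x : ℝ):ℂ) ^ (s-1))) (Ioi 0) := h1.const_mul _
  refine (h2.congr_fun (fun t ht => ?_) measurableSet_Ioi)
  have ht' : (0:ℝ) < t := ht
  have hLne : ((L:ℂ)) ^ (s-1) ≠ 0 := by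
    simp only [ne_eq, Complex.cpow_eq_zero_iff, Complex.ofReal_eq_zero, not_and_or, not_not]
    exact Or.inl hL.ne'
  beta_reduce
  rw [Complex.ofReal_mul, Complex.mul_cpow_ofReal_nonneg hL.le ht'.le, texp_eq ht' s,
    Complex.ofReal_exp]
  field_simp

end Stmt13Aux

namespace Stmt13Aux

open Complex Set MeasureTheory

lemma integral_base {s : ℂ} (hs : 0 < s.re) {L : ℝ} (hL : 0 < L) :
    ∫ t in Ioi (0:ℝ), Complex.exp (((-(L*t)) : ℝ) : ℂ) *
      Complex.exp ((s-1) * ((Real.log t : ℝ) : ℂ))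
      = (1/(L:ℂ)) ^ s * Complex.Gamma s := by
  rw [← Complex.integral_cpow_mul_exp_neg_mul_Ioi hs hL]
  refine setIntegral_congr_fun measurableSet_Ioi (fun t ht => ?_)
  have ht' : (0:ℝ) < t := ht
  rw [texp_eq ht' s, mul_comm]
  congr 1
  push_cast
  ring_nf

/-- the key scalar identity -/
lemma key_scalar {s : ℂ} (x : ℝ) (hx : 0 < x) (m : ℕ) (z : ℂ) :
    Complex.I * ((-2*(Real.pi:ℂ)*Complex.I * ((x:ℂ) * z)) *
      ((1/((2*Real.pi*((m:ℝ)+1)*x : ℝ):ℂ)) ^ s * Complex.Gamma s))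
    = Complex.exp ((1-s) * ((Real.log (2*Real.pi) : ℝ):ℂ)) * Complex.Gamma s *
      (Complex.exp ((1-s) * ((Real.log x : ℝ):ℂ)) *
        (Complex.exp (-s * ((Real.log ((m:ℝ)+1) : ℝ):ℂ)) * z)) := by
  have hπ : (0:ℝ) < 2*Real.pi := by positivity
  have hm : (0:ℝ) < (m:ℝ)+1 := by positivity
  have hL : (0:ℝ) < 2*Real.pi*((m:ℝ)+1)*x := by positivity
  set u : ℂ := ((Real.log (2*Real.pi) : ℝ):ℂ) with hu
  set v : ℂ := ((Real.log x : ℝ):ℂ) with hv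
  set w : ℂ := ((Real.log ((m:ℝ)+1) : ℝ):ℂ) with hw
  have hlog : Real.log (2*Real.pi*((m:ℝ)+1)*x)
      = Real.log (2*Real.pi) + Real.log ((m:ℝ)+1) + Real.log x := by
    rw [Real.log_mul (by positivity) hx.ne', Real.log_mul hπ.ne' hm.ne']
  have hcpow : (1/((2*Real.pi*((m:ℝ)+1)*x : ℝ):ℂ)) ^ s = Complex.exp (-(s*(u+w+v))) := by
    rw [show (1/((2*Real.pi*((m:ℝ)+1)*x : ℝ):ℂ)) = (((2*Real.pi*((m:ℝ)+1)*x)⁻¹ : ℝ) : ℂ) by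
      push_cast; ring,
      Complex.cpow_def_of_ne_zero (Complex.ofReal_ne_zero.mpr (by positivity)),
      ← Complex.ofReal_log (by positivity), Real.log_inv, hlog]
    congr 1
    simp only [hu, hv, hw]
    push_cast
    ring
  have h2π : ((2*Real.pi : ℝ):ℂ) = Complex.exp u := by
    rw [hu, ← Complex.ofReal_exp, Real.exp_log hπ]
  have hxe : ((x : ℝ):ℂ) = Complex.exp v := by
    rw [hv, ← Complex.ofReal_exp, Real.exp_log hx]
  have hII : Complex.I * (-2*(Real.pi:ℂ)*Complex.I) = ((2*Real.pi : ℝ):ℂ) := by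
    push_cast
    linear_combination (-2*(Real.pi:ℂ)) * Complex.I_mul_I
  have e1 : Complex.exp ((1-s)*u) = Complex.exp u * Complex.exp (-(s*u)) := by
    rw [← Complex.exp_add]; congr 1; ring
  have e2 : Complex.exp ((1-s)*v) = Complex.exp v * Complex.exp (-(s*v)) := by
    rw [← Complex.exp_add]; congr 1; ring
  have e3 : Complex.exp (-(s*(u+w+v)))
      = Complex.exp (-(s*u)) * Complex.exp (-(s*w)) * Complex.exp (-(s*v)) := by
    rw [← Complex.exp_add, ← Complex.exp_add]; congr 1; ring
  have e4 : Complex.exp (-s * w) = Complex.exp (-(s*w)) := by congr 1; ring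
  calc Complex.I * ((-2*(Real.pi:ℂ)*Complex.I * ((x:ℂ) * z)) *
      ((1/((2*Real.pi*((m:ℝ)+1)*x : ℝ):ℂ)) ^ s * Complex.Gamma s))
      = (Complex.I * (-2*(Real.pi:ℂ)*Complex.I)) * (x:ℂ) * z *
        ((1/((2*Real.pi*((m:ℝ)+1)*x : ℝ):ℂ)) ^ s * Complex.Gamma s) := by ring
    _ = _ := by
      rw [hII, hcpow, h2π, hxe, e3, e1, e2, e4]
      ring

end Stmt13Aux

namespace Stmt13Aux

open Complex Set MeasureTheory

variable (a b r : ℚ) (s : ℂ)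

noncomputable def lamP (p : {x : ℚ // (x - a).den = 1 ∧ 0 < x} × ℕ) : ℝ :=
  2*Real.pi*((p.2:ℝ)+1)*((p.1.1 : ℚ) : ℝ)

noncomputable def cP (p : {x : ℚ // (x - a).den = 1 ∧ 0 < x} × ℕ) : ℂ :=
  Complex.exp (2*(Real.pi:ℂ)*Complex.I*((p.2:ℂ)+1)*((b:ℂ)+(p.1.1:ℂ)*(r:ℂ)))

noncomputable def gP (p : {x : ℚ // (x - a).den = 1 ∧ 0 < x} × ℕ) (t : ℝ) : ℂ :=
  (-2*(Real.pi:ℂ)*Complex.I * ((p.1.1:ℂ) *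
      (cP a b r p * Complex.exp (((-(lamP a p * t)) : ℝ) : ℂ)))) *
    Complex.exp ((s-1) * ((Real.log t : ℝ) : ℂ))

variable {a b r s}

lemma xR_pos (p : {x : ℚ // (x - a).den = 1 ∧ 0 < x} × ℕ) : (0:ℝ) < ((p.1.1 : ℚ) : ℝ) := by
  exact_mod_cast p.1.2.2

lemma lamP_pos (p : {x : ℚ // (x - a).den = 1 ∧ 0 < x} × ℕ) : 0 < lamP a p := by
  have := xR_pos p
  have := Real.pi_pos
  unfold lamP
  positivity

lemma norm_cP (p : {x : ℚ // (x - a).den = 1 ∧ 0 < x} × ℕ) : ‖cP a b r p‖ = 1 :=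
  norm_c p.2 p.1.1 b r

lemma ratCast_eq (q : ℚ) : (q : ℂ) = (((q : ℝ)) : ℂ) := by push_cast; ring

lemma norm_gP {t : ℝ} (ht : 0 < t) (p : {x : ℚ // (x - a).den = 1 ∧ 0 < x} × ℕ) :
    ‖gP a b r s p t‖
      = 2*Real.pi*((p.1.1 : ℚ) : ℝ) * (t ^ (s.re - 1) * Real.exp (-(lamP a p * t))) := by
  have hx : ‖((p.1.1 : ℚ) : ℂ)‖ = ((p.1.1 : ℚ) : ℝ) := by
    rw [ratCast_eq, Complex.norm_real, Real.norm_eq_abs, abs_of_pos (xR_pos p)]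
  have hE : ‖Complex.exp (((-(lamP a p * t)) : ℝ) : ℂ)‖ = Real.exp (-(lamP a p * t)) := by
    rw [Complex.norm_exp]
    simp
  have h2 : ‖(-2 : ℂ)‖ = 2 := by norm_num
  have hπn : ‖((Real.pi:ℝ):ℂ)‖ = Real.pi := by
    rw [Complex.norm_real, Real.norm_eq_abs, abs_of_pos Real.pi_pos]
  have hI : ‖Complex.I‖ = 1 := by
    rw [Complex.norm_I]
  unfold gP
  simp only [norm_mul]
  rw [h2, hπn, hI, hx, hE, norm_cP, norm_texp ht s]
  ring

lemma gP_integrable (hs : 0 < s.re) (p : {x : ℚ // (x - a).den = 1 ∧ 0 < x} × ℕ) :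
    IntegrableOn (gP a b r s p) (Ioi 0) := by
  have h : IntegrableOn (fun t : ℝ => (-2*(Real.pi:ℂ)*Complex.I * ((p.1.1:ℂ) * cP a b r p)) *
      (Complex.exp (((-(lamP a p * t)) : ℝ) : ℂ) *
        Complex.exp ((s-1) * ((Real.log t : ℝ) : ℂ)))) (Ioi 0) :=
    (integrableOn_base hs (lamP_pos p)).const_mul _
  refine h.congr_fun (fun t ht => ?_) measurableSet_Ioi
  unfold gP
  ring

lemma gP_integral (hs : 0 < s.re) (p : {x : ℚ // (x - a).den = 1 ∧ 0 < x} × ℕ) :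
    ∫ t in Ioi (0:ℝ), gP a b r s p t
      = (-2*(Real.pi:ℂ)*Complex.I * ((p.1.1:ℂ) * cP a b r p)) *
        ((1/((lamP a p : ℝ):ℂ)) ^ s * Complex.Gamma s) := by
  rw [← integral_base hs (lamP_pos p), ← integral_const_mul]
  refine setIntegral_congr_fun measurableSet_Ioi (fun t ht => ?_)
  unfold gP
  ring

lemma gP_norm_integral (hs : 0 < s.re) (p : {x : ℚ // (x - a).den = 1 ∧ 0 < x} × ℕ) :
    ∫ t in Ioi (0:ℝ), ‖gP a b r s p t‖
      = 2*Real.pi*((p.1.1 : ℚ) : ℝ) * ((1/(lamP a p)) ^ s.re * Real.Gamma s.re) := by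
  rw [← Real.integral_rpow_mul_exp_neg_mul_Ioi hs (lamP_pos p), ← integral_const_mul]
  refine setIntegral_congr_fun measurableSet_Ioi (fun t ht => ?_)
  exact norm_gP ht p

end Stmt13Aux

namespace Stmt13Aux

open Complex Set MeasureTheory

variable {a b r : ℚ} {s : ℂ}

lemma norm_integral_eq (hσ : 2 < s.re) (p : {x : ℚ // (x - a).den = 1 ∧ 0 < x} × ℕ) :
    2*Real.pi*((p.1.1 : ℚ) : ℝ) * ((1/(lamP a p)) ^ s.re * Real.Gamma s.re)
      = (2*Real.pi * (2*Real.pi) ^ (-s.re) * Real.Gamma s.re) *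
        (((p.1.1 : ℚ) : ℝ) ^ (1-s.re) * (((p.2:ℝ)+1)) ^ (-s.re)) := by
  set x : ℝ := ((p.1.1 : ℚ) : ℝ) with hxd
  have hx : 0 < x := xR_pos p
  have hm : (0:ℝ) < (p.2:ℝ)+1 := by positivity
  have hπ : (0:ℝ) < 2*Real.pi := by positivity
  have h1 : 1/(lamP a p) = (2*Real.pi)⁻¹ * (((p.2:ℝ)+1)⁻¹ * x⁻¹) := by
    unfold lamP
    rw [← hxd]
    field_simp
  rw [h1, Real.mul_rpow (by positivity) (by positivity),
    Real.mul_rpow (by positivity) (by positivity),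
    Real.inv_rpow hπ.le, Real.inv_rpow hm.le, Real.inv_rpow hx.le,
    ← Real.rpow_neg hπ.le, ← Real.rpow_neg hm.le, ← Real.rpow_neg hx.le,
    show (1-s.re) = 1 + (-s.re) by ring, Real.rpow_add hx, Real.rpow_one]
  ring

lemma sum_norm_integral (hσ : 2 < s.re) :
    Summable (fun p : {x : ℚ // (x - a).den = 1 ∧ 0 < x} × ℕ =>
      2*Real.pi*((p.1.1 : ℚ) : ℝ) * ((1/(lamP a p)) ^ s.re * Real.Gamma s.re)) := by
  have h1 : Summable (fun y : {x : ℚ // (x - a).den = 1 ∧ 0 < x} =>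
      ((y.1 : ℚ) : ℝ) ^ (1-s.re)) := summable_rpow (by linarith)
  have h2 : Summable (fun m : ℕ => ((m:ℝ)+1) ^ (-s.re)) := summable_nat_shift (by linarith)
  have h3 := (h1.mul_of_nonneg h2 (fun y => Real.rpow_nonneg (xR_pos (⟨y, 0⟩ : _ × ℕ)).le _)
    (fun m => Real.rpow_nonneg (by positivity) _)).mul_left
    (2*Real.pi * (2*Real.pi) ^ (-s.re) * Real.Gamma s.re)
  exact h3.congr (fun p => (norm_integral_eq hσ p).symm)

lemma sumT {t : ℝ} (ht : 0 < t) :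
    Summable (fun p : {x : ℚ // (x - a).den = 1 ∧ 0 < x} × ℕ =>
      ((p.1.1 : ℚ) : ℝ) * Real.exp (-(lamP a p * t))) := by
  set c : ℝ := 2*Real.pi*t with hc
  have hc0 : 0 < c := by have := Real.pi_pos; positivity
  set x₀R : ℝ := ((x₀ a : ℚ) : ℝ) with hx₀
  have hx₀0 : 0 < x₀R := by rw [hx₀]; exact_mod_cast x₀_pos (a := a)
  have hf : Summable (fun y : {x : ℚ // (x - a).den = 1 ∧ 0 < x} =>
      ((y.1 : ℚ) : ℝ) * Real.exp (-(c * ((y.1 : ℚ) : ℝ)))) := summable_mul_exp hc0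
  have hg : Summable (fun m : ℕ => (Real.exp (-(c * x₀R))) ^ m) := by
    apply summable_geometric_of_lt_one (Real.exp_pos _).le
    rw [Real.exp_lt_one_iff]
    nlinarith
  have hfg := hf.mul_of_nonneg hg
    (fun y => by have := xR_pos (⟨y, 0⟩ : _ × ℕ); positivity)
    (fun m => by positivity)
  refine Summable.of_nonneg_of_le (fun p => ?_) (fun p => ?_) hfg
  · have := xR_pos p; positivity
  · have hx : 0 < ((p.1.1 : ℚ) : ℝ) := xR_pos p
    have hx₀le : x₀R ≤ ((p.1.1 : ℚ) : ℝ) := by rw [hx₀]; exact_mod_cast x₀_le p.1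
    have hexp : Real.exp (-(lamP a p * t))
        ≤ Real.exp (-(c * ((p.1.1 : ℚ) : ℝ))) * Real.exp (-(c * x₀R)) ^ p.2 := by
      rw [← Real.exp_nat_mul, ← Real.exp_add]
      apply Real.exp_le_exp.mpr
      unfold lamP
      rw [hc]
      have hπ := Real.pi_pos
      nlinarith [mul_le_mul_of_nonneg_left hx₀le
        (by positivity : (0:ℝ) ≤ 2*Real.pi*t*(p.2:ℝ))]
    calc ((p.1.1 : ℚ) : ℝ) * Real.exp (-(lamP a p * t))
        ≤ ((p.1.1 : ℚ) : ℝ) *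
          (Real.exp (-(c * ((p.1.1 : ℚ) : ℝ))) * Real.exp (-(c * x₀R)) ^ p.2) :=
          mul_le_mul_of_nonneg_left hexp hx.le
      _ = _ := by ring

lemma ennnorm_tsum_le' {ι : Type*} [Countable ι] (f : ι → ℂ) :
    (‖∑' i, f i‖₊ : ENNReal) ≤ ∑' i, (‖f i‖₊ : ENNReal) := by
  by_cases h : Summable (fun i => ‖f i‖₊)
  · rw [← ENNReal.coe_tsum h]
    exact_mod_cast nnnorm_tsum_le h
  · have : ∑' i, (‖f i‖₊ : ENNReal) = ⊤ := by
      by_contra hne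
      exact h (ENNReal.tsum_coe_ne_top_iff_summable.mp hne)
    rw [this]
    exact le_top

end Stmt13Aux

namespace Stmt13Aux

open Complex Set MeasureTheory

variable {a b r : ℚ} {s : ℂ}

lemma norm_cexp_mul_ofReal (z : ℂ) (w : ℝ) :
    ‖Complex.exp (z * (w:ℂ))‖ = Real.exp (z.re * w) := by
  rw [Complex.norm_exp]
  congr 1
  simp [Complex.mul_re]

lemma sumC {t : ℝ} (ht : 0 < t) :
    Summable (fun p : {x : ℚ // (x - a).den = 1 ∧ 0 < x} × ℕ =>
      (p.1.1:ℂ) * (cP a b r p * Complex.exp (((-(lamP a p * t)) : ℝ) : ℂ))) := by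
  apply Summable.of_norm
  refine (sumT ht).congr fun p => ?_
  rw [norm_mul, norm_mul, norm_cP]
  have hx : ‖((p.1.1 : ℚ) : ℂ)‖ = ((p.1.1 : ℚ) : ℝ) := by
    rw [ratCast_eq, Complex.norm_real, Real.norm_eq_abs, abs_of_pos (xR_pos p)]
  have hE : ‖Complex.exp (((-(lamP a p * t)) : ℝ) : ℂ)‖ = Real.exp (-(lamP a p * t)) := by
    rw [Complex.norm_exp]
    simp
  rw [hx, hE, one_mul]

lemma sum_gP {t : ℝ} (ht : 0 < t) :
    Summable (fun p : {x : ℚ // (x - a).den = 1 ∧ 0 < x} × ℕ => gP a b r s p t) := by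
  have h := ((sumC (a := a) (b := b) (r := r) ht).mul_left (-2*(Real.pi:ℂ)*Complex.I)).mul_right
    (Complex.exp ((s-1) * ((Real.log t : ℝ) : ℂ)))
  exact h.congr fun p => by unfold gP; ring

lemma pointwise_eq (a b r : ℚ) (s : ℂ) {t : ℝ} (ht : 0 < t) :
    EisPlus a b ((r:ℂ) + (t:ℂ)*Complex.I) * Complex.exp ((s-1) * ((Real.log t : ℝ):ℂ))
      = ∑' p : {x : ℚ // (x - a).den = 1 ∧ 0 < x} × ℕ, gP a b r s p t := by
  have hsplit : ∀ (y : {x : ℚ // (x - a).den = 1 ∧ 0 < x}) (m : ℕ),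
      Complex.exp (2*(Real.pi:ℂ)*Complex.I*((m:ℂ)+1)*((y.1:ℂ)*((r:ℂ)+(t:ℂ)*Complex.I)+(b:ℂ)))
        = cP a b r (y, m) * Complex.exp (((-(lamP a (y, m) * t)) : ℝ) : ℂ) := by
    intro y m
    exact exp_split m y.1 b r t
  have h1 : ∑' p : {x : ℚ // (x - a).den = 1 ∧ 0 < x} × ℕ, gP a b r s p t
      = ((-2*(Real.pi:ℂ)*Complex.I) *
          ∑' p : {x : ℚ // (x - a).den = 1 ∧ 0 < x} × ℕ,
            ((p.1.1:ℂ) * (cP a b r p * Complex.exp (((-(lamP a p * t)) : ℝ) : ℂ)))) *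
        Complex.exp ((s-1) * ((Real.log t : ℝ):ℂ)) := by
    rw [← tsum_mul_left, ← tsum_mul_right]
    exact tsum_congr fun p => by unfold gP; ring
  have h2 : ∑' p : {x : ℚ // (x - a).den = 1 ∧ 0 < x} × ℕ,
        ((p.1.1:ℂ) * (cP a b r p * Complex.exp (((-(lamP a p * t)) : ℝ) : ℂ)))
      = ∑' y : {x : ℚ // (x - a).den = 1 ∧ 0 < x}, (y.1:ℂ) *
          ∑' m : ℕ, (cP a b r (y, m) * Complex.exp (((-(lamP a (y, m) * t)) : ℝ) : ℂ)) := by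
    rw [Summable.tsum_prod' (sumC ht) (sumC ht).prod_factor]
    refine tsum_congr fun y => ?_
    show (∑' m : ℕ, (y.1:ℂ) * (cP a b r (y, m) *
      Complex.exp (((-(lamP a (y, m) * t)) : ℝ) : ℂ))) = _
    exact tsum_mul_left
  rw [h1, h2]
  simp only [EisPlus]
  congr 2
  exact tsum_congr fun y => congrArg (fun z => (y.1:ℂ) * z)
    (tsum_congr fun m => hsplit y m)

lemma lintegral_norm_ne_top (hσ : 2 < s.re) :
    ∑' p : {x : ℚ // (x - a).den = 1 ∧ 0 < x} × ℕ,
      ∫⁻ t in Ioi (0:ℝ), ‖gP a b r s p t‖₊ ≠ ⊤ := by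
  have h0 : 0 < s.re := by linarith
  have hsummable : Summable (fun p : {x : ℚ // (x - a).den = 1 ∧ 0 < x} × ℕ =>
      ∫ t in Ioi (0:ℝ), ‖gP a b r s p t‖) :=
    (sum_norm_integral hσ).congr fun p => (gP_norm_integral h0 p).symm
  have heq : ∀ p : {x : ℚ // (x - a).den = 1 ∧ 0 < x} × ℕ,
      ∫⁻ t in Ioi (0:ℝ), ‖gP a b r s p t‖₊
        = ENNReal.ofReal (∫ t in Ioi (0:ℝ), ‖gP a b r s p t‖) := fun p =>
    (ofReal_integral_norm_eq_lintegral_enorm (gP_integrable h0 p)).symm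
  rw [tsum_congr heq,
    ← ENNReal.ofReal_tsum_of_nonneg (fun p => integral_nonneg fun t => norm_nonneg _) hsummable]
  exact ENNReal.ofReal_ne_top

lemma integrable_G (hσ : 2 < s.re) :
    Integrable (fun t : ℝ => ∑' p : {x : ℚ // (x - a).den = 1 ∧ 0 < x} × ℕ, gP a b r s p t)
      (volume.restrict (Ioi 0)) := by
  have h0 : 0 < s.re := by linarith
  constructor
  · refine aestronglyMeasurable_of_tendsto_ae
      (Filter.atTop : Filter (Finset ({x : ℚ // (x - a).den = 1 ∧ 0 < x} × ℕ)))
      (f := fun F t => ∑ p ∈ F, gP a b r s p t) (fun F => ?_) ?_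
    · exact F.aestronglyMeasurable_fun_sum fun p _ => (gP_integrable (b := b) (r := r) h0 p).1
    · refine (ae_restrict_iff' measurableSet_Ioi).mpr (Filter.Eventually.of_forall
        fun t ht => ?_)
      exact (sum_gP ht).hasSum
  · show (∫⁻ t in Ioi (0:ℝ), ‖_‖₊) < ⊤
    calc ∫⁻ t in Ioi (0:ℝ), (‖∑' p : {x : ℚ // (x - a).den = 1 ∧ 0 < x} × ℕ, gP a b r s p t‖₊
          : ENNReal)
        ≤ ∫⁻ t in Ioi (0:ℝ), ∑' p : {x : ℚ // (x - a).den = 1 ∧ 0 < x} × ℕ,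
            (‖gP a b r s p t‖₊ : ENNReal) := lintegral_mono fun t => ennnorm_tsum_le' _
      _ = ∑' p : {x : ℚ // (x - a).den = 1 ∧ 0 < x} × ℕ,
            ∫⁻ t in Ioi (0:ℝ), ‖gP a b r s p t‖₊ :=
          lintegral_tsum fun p => (gP_integrable (b := b) (r := r) h0 p).1.enorm
      _ < ⊤ := lt_top_iff_ne_top.mpr (lintegral_norm_ne_top hσ)

end Stmt13Aux


open Stmt13Aux

/-- Let `a, b, r ∈ ℚ` and `s ∈ ℂ` with `Re(s) > 2`. Then
`t ↦ E₁⁺(a,b)(r+it)·t^{s−1}` is absolutely integrable on `(0,∞)`, the double series on the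
right converges absolutely, and
`i·∫_0^∞ E₁⁺(a,b)(r+it)·t^{s−1} dt
   = (2π)^{1−s}·Γ(s)·Σ_{x ∈ a+ℤ, x>0} x^{1−s}·Σ_{m=1}^∞ m^{−s}·e^{2πim(b+xr)}`,
with `x^{1−s} = exp((1−s)·log x)`, `m^{−s} = exp(−s·log m)` (real logarithm) and `Γ` the
complex Gamma function. -/
theorem stmt13 (a b r : ℚ) (s : ℂ) (hs : 2 < s.re) :
    IntegrableOn (fun t : ℝ =>
      EisPlus a b ((r : ℂ) + (t : ℂ) * Complex.I) *
        Complex.exp ((s - 1) * (Real.log t : ℂ))) (Set.Ioi 0) ∧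
    Summable (fun p : {x : ℚ // (x - a).den = 1 ∧ 0 < x} × ℕ =>
      ‖Complex.exp ((1 - s) * (Real.log ((p.1.1 : ℝ)) : ℂ)) *
        (Complex.exp (-s * (Real.log ((p.2 : ℝ) + 1) : ℂ)) *
          Complex.exp (2 * (Real.pi : ℂ) * Complex.I * ((p.2 : ℂ) + 1) *
            ((b : ℂ) + (p.1.1 : ℂ) * (r : ℂ))))‖) ∧
    Complex.I * (∫ t in Set.Ioi (0 : ℝ),
        EisPlus a b ((r : ℂ) + (t : ℂ) * Complex.I) *
          Complex.exp ((s - 1) * (Real.log t : ℂ)))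
      = Complex.exp ((1 - s) * (Real.log (2 * Real.pi) : ℂ)) * Complex.Gamma s *
        ∑' y : {x : ℚ // (x - a).den = 1 ∧ 0 < x},
          Complex.exp ((1 - s) * (Real.log ((y.1 : ℝ)) : ℂ)) *
          ∑' m : ℕ, Complex.exp (-s * (Real.log ((m : ℝ) + 1) : ℂ)) *
            Complex.exp (2 * (Real.pi : ℂ) * Complex.I * ((m : ℂ) + 1) *
              ((b : ℂ) + (y.1 : ℂ) * (r : ℂ))) := by
  have h0 : 0 < s.re := by linarith
  -- norm computation for the double series
  have hnorm2 : ∀ p : {x : ℚ // (x - a).den = 1 ∧ 0 < x} × ℕ,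
      ‖Complex.exp ((1 - s) * (Real.log ((p.1.1 : ℝ)) : ℂ)) *
        (Complex.exp (-s * (Real.log ((p.2 : ℝ) + 1) : ℂ)) *
          Complex.exp (2 * (Real.pi : ℂ) * Complex.I * ((p.2 : ℂ) + 1) *
            ((b : ℂ) + (p.1.1 : ℂ) * (r : ℂ))))‖
        = ((p.1.1 : ℚ) : ℝ) ^ (1 - s.re) * (((p.2 : ℝ) + 1)) ^ (-s.re) := by
    intro p
    have hx := xR_pos p
    have hm : (0:ℝ) < (p.2:ℝ)+1 := by positivity
    have e1 : (1-s).re = 1 - s.re := by simp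
    have e2 : (-s).re = -s.re := by simp
    rw [norm_mul, norm_mul, norm_c p.2 p.1.1 b r, mul_one, norm_cexp_mul_ofReal,
      norm_cexp_mul_ofReal, Real.rpow_def_of_pos hx, Real.rpow_def_of_pos hm, e1, e2,
      mul_comm (Real.log (((p.1.1 : ℚ) : ℝ))) (1 - s.re),
      mul_comm (Real.log ((p.2:ℝ)+1)) (-s.re)]
  have goal2 : Summable (fun p : {x : ℚ // (x - a).den = 1 ∧ 0 < x} × ℕ =>
      ‖Complex.exp ((1 - s) * (Real.log ((p.1.1 : ℝ)) : ℂ)) *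
        (Complex.exp (-s * (Real.log ((p.2 : ℝ) + 1) : ℂ)) *
          Complex.exp (2 * (Real.pi : ℂ) * Complex.I * ((p.2 : ℂ) + 1) *
            ((b : ℂ) + (p.1.1 : ℂ) * (r : ℂ))))‖) := by
    have h1 : Summable (fun y : {x : ℚ // (x - a).den = 1 ∧ 0 < x} =>
        ((y.1 : ℚ) : ℝ) ^ (1-s.re)) := summable_rpow (by linarith)
    have h2 : Summable (fun m : ℕ => ((m:ℝ)+1) ^ (-s.re)) := summable_nat_shift (by linarith)
    exact ((h1.mul_of_nonneg h2
      (fun y => Real.rpow_nonneg (xR_pos (⟨y, 0⟩ : _ × ℕ)).le _)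
      (fun m => Real.rpow_nonneg (by positivity) _)).congr
        fun p => (hnorm2 p).symm)
  -- a.e. identification with the double series
  have hae : (fun t : ℝ => ∑' p : {x : ℚ // (x - a).den = 1 ∧ 0 < x} × ℕ, gP a b r s p t)
      =ᵐ[volume.restrict (Set.Ioi 0)]
      (fun t : ℝ => EisPlus a b ((r : ℂ) + (t : ℂ) * Complex.I) *
        Complex.exp ((s - 1) * (Real.log t : ℂ))) :=
    (ae_restrict_iff' measurableSet_Ioi).mpr (Filter.Eventually.of_forall
      fun t ht => (pointwise_eq a b r s ht).symm)
  have hInt : IntegrableOn (fun t : ℝ =>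
      EisPlus a b ((r : ℂ) + (t : ℂ) * Complex.I) *
        Complex.exp ((s - 1) * (Real.log t : ℂ))) (Set.Ioi 0) :=
    (integrable_G hs).congr hae
  refine ⟨hInt, goal2, ?_⟩
  have hI3 : (∫ t in Set.Ioi (0:ℝ),
      EisPlus a b ((r : ℂ) + (t : ℂ) * Complex.I) *
        Complex.exp ((s - 1) * (Real.log t : ℂ)))
      = ∑' p : {x : ℚ // (x - a).den = 1 ∧ 0 < x} × ℕ, ∫ t in Set.Ioi (0:ℝ), gP a b r s p t := by
    rw [integral_congr_ae hae.symm]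
    exact integral_tsum (fun p => (gP_integrable h0 p).1) (lintegral_norm_ne_top hs)
  rw [hI3, ← tsum_mul_left]
  have hterm : ∀ p : {x : ℚ // (x - a).den = 1 ∧ 0 < x} × ℕ,
      Complex.I * ∫ t in Set.Ioi (0:ℝ), gP a b r s p t
        = Complex.exp ((1 - s) * (Real.log (2 * Real.pi) : ℂ)) * Complex.Gamma s *
          (Complex.exp ((1 - s) * (Real.log ((p.1.1 : ℝ)) : ℂ)) *
            (Complex.exp (-s * (Real.log ((p.2 : ℝ) + 1) : ℂ)) * cP a b r p)) := by
    intro p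
    rw [gP_integral h0 p]
    have hk := key_scalar (s := s) ((p.1.1 : ℚ) : ℝ) (xR_pos p) p.2 (cP a b r p)
    rw [ratCast_eq p.1.1]
    unfold lamP
    exact hk
  rw [tsum_congr hterm, tsum_mul_left]
  congr 1
  have hsum2 : Summable (fun p : {x : ℚ // (x - a).den = 1 ∧ 0 < x} × ℕ =>
      Complex.exp ((1 - s) * (Real.log ((p.1.1 : ℝ)) : ℂ)) *
        (Complex.exp (-s * (Real.log ((p.2 : ℝ) + 1) : ℂ)) * cP a b r p)) :=
    goal2.of_norm
  rw [Summable.tsum_prod' hsum2 hsum2.prod_factor]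
  refine tsum_congr fun y => ?_
  show (∑' m : ℕ, Complex.exp ((1 - s) * (Real.log ((y.1 : ℝ)) : ℂ)) *
    (Complex.exp (-s * (Real.log ((m : ℝ) + 1) : ℂ)) * cP a b r (y, m))) = _
  exact tsum_mul_left
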